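/- For an $L_x \times L_y$ rectangular lattice with $\min(L_x,L_y) < m < \max(L_x,L_y)$, the number of unordered pairs of distinct lattice sites whose taxicab distance equals $m$ is $D(\min(L_x,L_y)) - \min(L_x,L_y)^2 \cdot (m - \min(L_x,L_y))$, where $D(s) = 2sL_xL_y - (L_x+L_y)s^2 + \frac{s^3-s}{3}$. -/

import Mathlib

/-!
Count ordered pairs instead: for `m ≠ 0` every unordered pair at distance `m` gives exactly
two, and the ordered count is symmetric in `Lx, Ly`, so we may take `Lx ≤ m ≤ Ly`. Reading a pair
of sites coordinatewise, a horizontal pair `(x, x')` has `|x - x'| < Lx ≤ m`, so the vertical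
distance must be `k = m - |x - x'| ∈ (0, Ly]`, which is realised by `2 (Ly - k)` ordered vertical
pairs. Summing over `(x, x')` gives `2 (Lx² (Ly - m) + ∑ |x - x'|)`, and
`∑_{x, x' ≤ L} |x - x'| = (L³ - L) / 3`.
-/

/-- Taxicab distance between two integer lattice points. -/
def taxi (p q : ℤ × ℤ) : ℤ := |p.1 - q.1| + |p.2 - q.2|

/-- The `Lx × Ly` rectangular lattice `{1,…,Lx} × {1,…,Ly}`. -/
noncomputable def sites (Lx Ly : ℤ) : Finset (ℤ × ℤ) := Finset.Icc (1, 1) (Lx, Ly)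

/-- The number of unordered pairs of distinct lattice sites at taxicab distance `m`. -/
noncomputable def pairCount (Lx Ly m : ℤ) : ℕ :=
  (((sites Lx Ly).powersetCard 2).filter
    (fun s => ∃ p ∈ s, ∃ q ∈ s, p ≠ q ∧ taxi p q = m)).card


/-- The first-regime pair-count formula `D(s) = 2 s Lx Ly - (Lx+Ly) s² + (s³ - s)/3`. -/
def Dfirst (Lx Ly s : ℤ) : ℤ := 2 * s * Lx * Ly - (Lx + Ly) * s ^ 2 + (s ^ 3 - s) / 3

open Finset

theorem Finset.pair_eq_pair_iff {α : Type*} [DecidableEq α] {x y z w : α} :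
    ({x, y} : Finset α) = {z, w} ↔ x = z ∧ y = w ∨ x = w ∧ y = z := by
  rw [← coe_inj, coe_pair, coe_pair, Set.pair_eq_pair_iff]

theorem two_mul_card_filter_powersetCard_two {α : Type*} [DecidableEq α] (t : Finset α)
    (r : α → α → Prop) [DecidableRel r] (hsymm : ∀ p q, r p q → r q p)
    (hirr : ∀ p, ¬ r p p) :
    2 * #{s ∈ t.powersetCard 2 | ∃ p ∈ s, ∃ q ∈ s, p ≠ q ∧ r p q} =
      #{pq ∈ t ×ˢ t | r pq.1 pq.2} := by
  have hmaps : ∀ pq ∈ {pq ∈ t ×ˢ t | r pq.1 pq.2},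
      ({pq.1, pq.2} : Finset α) ∈ {s ∈ t.powersetCard 2 | ∃ p ∈ s, ∃ q ∈ s, p ≠ q ∧ r p q} := by
    rintro ⟨p, q⟩ hpq
    simp only [mem_filter, mem_product] at hpq
    have hne : p ≠ q := fun h => hirr p (h ▸ hpq.2)
    simp only [mem_filter, mem_powersetCard, insert_subset_iff, singleton_subset_iff]
    exact ⟨⟨hpq.1, card_pair hne⟩, p, by simp, q, by simp, hne, hpq.2⟩
  rw [card_eq_sum_card_fiberwise hmaps, sum_const_nat (m := 2), mul_comm]
  intro s hs
  simp only [mem_filter, mem_powersetCard] at hs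
  obtain ⟨⟨hst, hcard⟩, p, hp, q, hq, hne, hpq⟩ := hs
  obtain rfl : s = {p, q} :=
    (eq_of_subset_of_card_le (by simp [insert_subset_iff, hp, hq])
      (by simp [hcard, card_pair hne])).symm
  have hfiber : {pq ∈ {pq ∈ t ×ˢ t | r pq.1 pq.2} | ({pq.1, pq.2} : Finset α) = {p, q}} =
      {(p, q), (q, p)} := by
    ext ⟨x, y⟩
    simp only [mem_filter, mem_product, pair_eq_pair_iff, mem_insert, mem_singleton, Prod.mk.injEq]
    constructor
    · exact fun h => h.2
    · rintro (⟨rfl, rfl⟩ | ⟨rfl, rfl⟩)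
      · exact ⟨⟨⟨hst (by simp), hst (by simp)⟩, hpq⟩, .inl ⟨rfl, rfl⟩⟩
      · exact ⟨⟨⟨hst (by simp), hst (by simp)⟩, hsymm _ _ hpq⟩, .inr ⟨rfl, rfl⟩⟩
  rw [hfiber, card_pair (by simp [hne])]

theorem card_filter_sub_eq (L d : ℤ) :
    (#{x ∈ Icc 1 L ×ˢ Icc 1 L | x.1 - x.2 = d} : ℤ) = max (L - |d|) 0 := by
  have himage : {x ∈ Icc 1 L ×ˢ Icc 1 L | x.1 - x.2 = d} =
      (Icc (max 1 (1 + d)) (min L (L + d))).image fun x => (x, x - d) := by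
    ext ⟨x, y⟩
    simp only [mem_filter, mem_product, mem_Icc, mem_image, Prod.mk.injEq]
    constructor
    · rintro ⟨⟨⟨hx1, hx2⟩, hy1, hy2⟩, hd⟩
      exact ⟨x, by omega, rfl, by omega⟩
    · rintro ⟨z, hz, rfl, rfl⟩
      omega
  rw [himage, card_image_of_injective _ fun a b h => congrArg Prod.fst h, Int.card_Icc]
  rcases abs_cases d with ⟨h, _⟩ | ⟨h, _⟩ <;> rw [h] <;> omega

theorem card_filter_abs_sub_eq (L k : ℤ) (hk : 0 < k) :
    (#{x ∈ Icc 1 L ×ˢ Icc 1 L | |x.1 - x.2| = k} : ℤ) = 2 * max (L - k) 0 := by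
  simp only [abs_eq hk.le, filter_or]
  rw [card_union_of_disjoint (disjoint_filter.mpr fun _ _ h h' => by omega)]
  push_cast
  rw [card_filter_sub_eq, card_filter_sub_eq, abs_neg, abs_of_pos hk]
  ring

theorem two_mul_sum_Icc_sub (n : ℕ) :
    2 * ∑ x ∈ Icc (1 : ℤ) n, (n + 1 - x) = n * (n + 1) := by
  induction n with
  | zero => simp
  | succ n ih =>
    push_cast
    rw [← insert_Icc_right_eq_Icc_add_one (by omega), sum_insert (by simp)]
    have hshift : ∀ x : ℤ, (n : ℤ) + 1 + 1 - x = (n + 1 - x) + 1 := fun x => by ring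
    simp only [hshift, sum_add_distrib, sum_const, Int.card_Icc, add_sub_cancel_right,
      Int.toNat_natCast, nsmul_eq_mul, mul_one]
    linear_combination ih

theorem three_mul_sum_abs_sub_Icc (n : ℕ) :
    3 * ∑ a ∈ Icc (1 : ℤ) n ×ˢ Icc (1 : ℤ) n, |a.1 - a.2| = n ^ 3 - n := by
  induction n with
  | zero => simp
  | succ n ih =>
    have hsum : ∑ x ∈ Icc (1 : ℤ) n, |(n + 1 : ℤ) - x| = ∑ x ∈ Icc (1 : ℤ) n, (n + 1 - x) :=
      sum_congr rfl fun x hx => abs_of_nonneg (by simp at hx; omega)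
    have hgauss := two_mul_sum_Icc_sub n
    push_cast
    rw [← insert_Icc_right_eq_Icc_add_one (by omega)]
    rw [sum_product] at ih ⊢
    simp only [sum_insert (show (n + 1 : ℤ) ∉ Icc 1 (n : ℤ) by simp), sum_add_distrib]
    simp only [abs_sub_comm _ ((n : ℤ) + 1), hsum, sub_self, abs_zero]
    linear_combination ih + 3 * hgauss

/-- Ordered pairs of sites `(x, y), (x', y')` at taxicab distance `m`, listed coordinatewise as
`((x, x'), (y, y'))`. -/
noncomputable def orderedPairCount (Lx Ly m : ℤ) : ℕ :=
  #{ab ∈ (Icc 1 Lx ×ˢ Icc 1 Lx) ×ˢ (Icc 1 Ly ×ˢ Icc 1 Ly) |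
    |ab.1.1 - ab.1.2| + |ab.2.1 - ab.2.2| = m}

theorem card_filter_taxi_eq (Lx Ly m : ℤ) :
    #{pq ∈ sites Lx Ly ×ˢ sites Lx Ly | taxi pq.1 pq.2 = m} =
      orderedPairCount Lx Ly m := by
  rw [orderedPairCount]
  refine card_equiv (Equiv.prodProdProdComm ℤ ℤ ℤ ℤ) fun ⟨⟨x, y⟩, x', y'⟩ => ?_
  rw [mem_filter, mem_filter]
  simp only [sites, Icc_prod_def, taxi, mem_product, Equiv.prodProdProdComm_apply]
  tauto

theorem orderedPairCount_comm (Lx Ly m : ℤ) :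
    orderedPairCount Lx Ly m = orderedPairCount Ly Lx m :=
  card_equiv (Equiv.prodComm _ _) fun ab => by
    rw [mem_filter, mem_filter, add_comm]
    simp only [mem_product, Equiv.prodComm_apply, Prod.fst_swap, Prod.snd_swap]
    exact and_congr_left' and_comm

theorem orderedPairCount_eq_of_le (L L' m : ℤ) (hL : 0 ≤ L) (hm : L ≤ m) (hm' : m ≤ L') :
    (orderedPairCount L L' m : ℤ) =
      2 * (L ^ 2 * (L' - m) + ∑ a ∈ Icc 1 L ×ˢ Icc 1 L, |a.1 - a.2|) := by
  have hfiber : ∀ a ∈ Icc 1 L ×ˢ Icc 1 L,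
      (#{b ∈ Icc 1 L' ×ˢ Icc 1 L' | |a.1 - a.2| + |b.1 - b.2| = m} : ℤ) =
        2 * (L' - m + |a.1 - a.2|) := by
    rintro ⟨x, x'⟩ ha
    simp only [mem_product, mem_Icc] at ha
    have hdist : |x - x'| < L := by rw [abs_lt]; omega
    have hdist_nonneg := abs_nonneg (x - x')
    simp only [← eq_sub_iff_add_eq']
    rw [card_filter_abs_sub_eq _ _ (by omega), max_eq_left (by omega)]
    ring
  rw [orderedPairCount, card_filter, sum_product]
  simp only [← card_filter]
  push_cast
  rw [sum_congr rfl hfiber, ← mul_sum, sum_add_distrib, sum_const, card_product, Int.card_Icc,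
    add_sub_cancel_right, nsmul_eq_mul]
  push_cast
  rw [Int.toNat_of_nonneg hL]
  ring

theorem taxi_comm (p q : ℤ × ℤ) : taxi p q = taxi q p := by
  simp only [taxi, abs_sub_comm]

theorem two_mul_pairCount (Lx Ly m : ℤ) (hm : m ≠ 0) :
    2 * pairCount Lx Ly m = orderedPairCount Lx Ly m := by
  rw [pairCount, two_mul_card_filter_powersetCard_two _ (fun p q => taxi p q = m)
    (fun p q h => (taxi_comm q p).trans h) (fun p h => hm (by simpa [taxi] using h.symm)),
    card_filter_taxi_eq]

theorem pairCount_comm (Lx Ly m : ℤ) (hm : m ≠ 0) : pairCount Lx Ly m = pairCount Ly Lx m := by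
  have h := orderedPairCount_comm Lx Ly m
  rw [← two_mul_pairCount Lx Ly m hm, ← two_mul_pairCount Ly Lx m hm] at h
  omega

theorem Dfirst_comm (Lx Ly s : ℤ) : Dfirst Lx Ly s = Dfirst Ly Lx s := by
  simp only [Dfirst]
  ring_nf

theorem Dfirst_self_sub_eq (L L' m S : ℤ) (hS : 3 * S = L ^ 3 - L) :
    Dfirst L L' L - L ^ 2 * (m - L) = L ^ 2 * (L' - m) + S := by
  rw [Dfirst, ← hS, Int.mul_ediv_cancel_left _ (by norm_num)]
  ring

theorem pairCount_eq_of_le (Lx Ly m : ℤ) (hLx : 1 ≤ Lx) (hm : Lx ≤ m) (hm' : m ≤ Ly) :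
    (pairCount Lx Ly m : ℤ) = Dfirst Lx Ly Lx - Lx ^ 2 * (m - Lx) := by
  lift Lx to ℕ using by omega
  have hcount := congrArg (Nat.cast : ℕ → ℤ) (two_mul_pairCount Lx Ly m (by omega))
  push_cast at hcount
  rw [orderedPairCount_eq_of_le _ _ _ (by omega) hm hm'] at hcount
  rw [Dfirst_self_sub_eq _ _ _ _ (three_mul_sum_abs_sub_Icc Lx)]
  linarith

theorem stmt2 (Lx Ly m : ℤ) (hLx : 1 ≤ Lx) (hLy : 1 ≤ Ly)
    (hm1 : min Lx Ly < m) (hm2 : m < max Lx Ly) :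
    (pairCount Lx Ly m : ℤ) =
      Dfirst Lx Ly (min Lx Ly) - (min Lx Ly) ^ 2 * (m - min Lx Ly) := by
  rcases le_total Lx Ly with h | h
  · rw [min_eq_left h] at hm1 ⊢
    rw [max_eq_right h] at hm2
    exact pairCount_eq_of_le Lx Ly m hLx hm1.le hm2.le
  · rw [min_eq_right h] at hm1 ⊢
    rw [max_eq_left h] at hm2
    rw [pairCount_comm Lx Ly m (by omega), Dfirst_comm]
    exact pairCount_eq_of_le Ly Lx m hLy hm1.le hm2.le
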